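/- Let G be a partial mixed graph and let Q, W, Y be distinct vertices such that there is an edge between Q and W with an arrowhead at W, and let Z be a vertex set with Q, W, Y ∉ Z. Suppose there is a path π between W and Y whose edge incident to W has an arrowhead at W, which does not contain Q, and which is not blocked by Z. Then the path obtained by prepending the edge between Q and W to π witnesses that Q and Y are m-connected given Z ∪ {W} in G (on the concatenated path W is a collider that lies in the conditioning set, and every other non-endpoint vertex retains its collider/non-collider status). (Key path-concatenation step in the proof of the paper's Theorem 1.) -/
import Mathlib


/-- An edge mark in a partial mixed graph: arrowhead, tail, or circle. -/
inductive Mark : Type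
  | arrowhead : Mark
  | tail : Mark
  | circle : Mark
  deriving DecidableEq

/-- A partial mixed graph: at most one edge between each pair of distinct
vertices, each edge carrying a mark at each of its two endpoints.
`mark a b` is the mark at `b` on the edge between `a` and `b`
(only meaningful when `adj a b`). -/
structure PMG (V : Type*) where
  adj : V → V → Prop
  adj_symm : ∀ a b, adj a b → adj b a
  adj_irrefl : ∀ a, ¬ adj a a
  mark : V → V → Mark

namespace PMG

variable {V : Type*} (G : PMG V)

/-- A directed edge `a → b`: tail at `a`, arrowhead at `b`. -/
def DirEdge (a b : V) : Prop :=
  G.adj a b ∧ G.mark a b = Mark.arrowhead ∧ G.mark b a = Mark.tail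

/-- `a` is a parent of `b` if there is a directed edge `a → b`. -/
def Parent (a b : V) : Prop := G.DirEdge a b

/-- `a` is a spouse of `b` if there is a bidirected edge `a ↔ b`. -/
def Spouse (a b : V) : Prop :=
  G.adj a b ∧ G.mark a b = Mark.arrowhead ∧ G.mark b a = Mark.arrowhead

/-- `p` is a path between `a` and `b`: a sequence of distinct vertices in
which consecutive vertices are adjacent, starting at `a` and ending at `b`. -/
def IsPath (a b : V) (p : List V) : Prop :=
  2 ≤ p.length ∧ p.Nodup ∧ p.Chain' G.adj ∧ p.head? = some a ∧ p.getLast? = some b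

/-- The middle vertex `y` of a consecutive triple `x, y, z` on a path is a
collider if both incident path edges have an arrowhead at `y`. -/
def ColliderTriple (x y z : V) : Prop :=
  G.mark x y = Mark.arrowhead ∧ G.mark z y = Mark.arrowhead

/-- `y` is a collider on the path `p`. -/
def IsColliderOn (p : List V) (y : V) : Prop :=
  ∃ x z, [x, y, z] <:+: p ∧ G.ColliderTriple x y z

/-- The middle vertex `y` of a consecutive triple `x, y, z` on a path is a
definite non-collider if one of its incident path edges has a tail at `y`,
or both have circles at `y` and `x, z` are non-adjacent. -/
def DefNonColliderTriple (x y z : V) : Prop :=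
  G.mark x y = Mark.tail ∨ G.mark z y = Mark.tail ∨
    (G.mark x y = Mark.circle ∧ G.mark z y = Mark.circle ∧ ¬ G.adj x z)

/-- A path is of definite status if every non-endpoint vertex is a collider
or a definite non-collider on the path. -/
def DefiniteStatus (p : List V) : Prop :=
  ∀ x y z, [x, y, z] <:+: p → G.ColliderTriple x y z ∨ G.DefNonColliderTriple x y z

/-- A causal path from `a` to `b`: all edges are directed towards `b`. -/
def IsCausalPath (a b : V) (p : List V) : Prop :=
  G.IsPath a b p ∧ p.Chain' G.DirEdge

/-- `b` is a descendant of `a`. -/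
def Descendant (a b : V) : Prop := b = a ∨ ∃ p, G.IsCausalPath a b p

/-- One step of a possibly directed path from the `x` side towards the `y`
side: the mark at the endpoint closer to the origin is not an arrowhead. -/
def PossEdge (x y : V) : Prop := G.adj x y ∧ G.mark y x ≠ Mark.arrowhead

/-- A possibly directed path from `a` to `b`. -/
def IsPossDirPath (a b : V) (p : List V) : Prop :=
  G.IsPath a b p ∧ p.Chain' G.PossEdge

/-- `b` is a possible descendant of `a`. -/
def PossDescendant (a b : V) : Prop := b = a ∨ ∃ p, G.IsPossDirPath a b p

/-- A non-causal path from `a` to `b`: a path between `a` and `b` that is not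
a possibly directed path from `a` to `b`. -/
def IsNonCausalPath (a b : V) (p : List V) : Prop :=
  G.IsPath a b p ∧ ¬ p.Chain' G.PossEdge

/-- The path `p` is blocked by the vertex set `Z`: some non-endpoint vertex
`y` is a non-collider belonging to `Z`, or a collider such that neither `y`
nor any of its descendants belongs to `Z`. -/
def Blocked (Z : Set V) (p : List V) : Prop :=
  ∃ x y z, [x, y, z] <:+: p ∧
    ((¬ G.ColliderTriple x y z ∧ y ∈ Z) ∨
      (G.ColliderTriple x y z ∧ ∀ d, G.Descendant y d → d ∉ Z))

/-- `a` and `b` are m-separated given `Z`: every path between `a` and `b` is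
blocked by `Z`. -/
def MSep (a b : V) (Z : Set V) : Prop :=
  ∀ p, G.IsPath a b p → G.Blocked Z p

/-- Vertex sets `A` and `B` are m-separated given `S`. -/
def MSepSet (A B S : Set V) : Prop :=
  ∀ a ∈ A, ∀ b ∈ B, G.MSep a b S

/-- The directed edge `w → v` is visible. -/
def Visible (w v : V) : Prop :=
  G.DirEdge w v ∧
    ∃ c, c ≠ v ∧ ¬ G.adj c v ∧
      ((G.adj c w ∧ G.mark c w = Mark.arrowhead) ∨
        (∃ p, G.IsPath c w p ∧
          (∀ x y z, [x, y, z] <:+: p → G.ColliderTriple x y z) ∧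
          (∃ x, [x, w] <:+ p ∧ G.mark x w = Mark.arrowhead) ∧
          (∀ x y z, [x, y, z] <:+: p → G.Parent y v)))

/-- The path `p` begins with a visible directed edge out of `w`. -/
def StartsVisible (w : V) (p : List V) : Prop :=
  ∃ v rest, p = w :: v :: rest ∧ G.Visible w v

/-- `G` is adjustment amenable relative to `(w, y)`: every possibly directed
path from `w` to `y` begins with a visible directed edge out of `w`. -/
def Amenable (w y : V) : Prop :=
  ∀ p, G.IsPossDirPath w y p → G.StartsVisible w p

/-- The forbidden set `Forb(w, y, G)`: possible descendants of `w` lying on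
some possibly directed path from `w` to `y`. -/
def Forb (w y : V) : Set V :=
  {x | G.PossDescendant w x ∧ ∃ p, G.IsPossDirPath w y p ∧ x ∈ p}

/-- A generalised back-door path from `w` to `y`: a path between `w` and `y`
that does not begin with a visible directed edge out of `w`. -/
def IsBackdoorPath (w y : V) (p : List V) : Prop :=
  G.IsPath w y p ∧ ¬ G.StartsVisible w p

/-- `Z` satisfies the generalised adjustment criterion relative to `(w, y)`. -/
def GAC (w y : V) (Z : Set V) : Prop :=
  G.Amenable w y ∧ Z ∩ G.Forb w y = ∅ ∧
    ∀ p, G.IsNonCausalPath w y p → G.DefiniteStatus p → G.Blocked Z p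

/-- `q` is a COSO variable (Cause Or Spouse of the treatment Only) relative
to `(w, y)`. -/
def COSO (w y q : V) : Prop :=
  (G.Parent q w ∨ G.Spouse q w) ∧ ¬ G.Parent q y ∧ ¬ G.Spouse q y

/-- The possible d-separation set `pds(w, y, G)`. -/
def pds (w y : V) : Set V :=
  {x | ∃ p, G.IsPath x w p ∧
    ∀ a b c, [a, b, c] <:+: p → G.ColliderTriple a b c ∨ G.adj a c}

end PMG

/-- Key path-concatenation step in the proof of the paper's Theorem 1: given
an edge between `Q` and `W` with an arrowhead at `W`, and a path `π` between
`W` and `Y` whose first edge has an arrowhead at `W`, which avoids `Q` and is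
not blocked by `Z`, prepending `Q` yields a path between `Q` and `Y` on which
`W` is a collider lying in the conditioning set `Z ∪ {W}`; this path is not
blocked by `Z ∪ {W}`, so `Q` and `Y` are m-connected given `Z ∪ {W}`. -/
theorem path_concatenation_mConnected
    {V : Type*} (G : PMG V) (Q W Y : V)
    (hQW : Q ≠ W) (hQY : Q ≠ Y) (hWY : W ≠ Y)
    (hadj : G.adj Q W) (hmark : G.mark Q W = Mark.arrowhead)
    (Z : Set V) (hQZ : Q ∉ Z) (hWZ : W ∉ Z) (hYZ : Y ∉ Z)
    (π : List V) (hπ : G.IsPath W Y π)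
    (hfirst : ∃ v rest, π = W :: v :: rest ∧ G.mark v W = Mark.arrowhead)
    (hQπ : Q ∉ π)
    (hunblocked : ¬ G.Blocked Z π) :
    G.IsPath Q Y (Q :: π) ∧
    G.IsColliderOn (Q :: π) W ∧ W ∈ Z ∪ {W} ∧
    ¬ G.Blocked (Z ∪ {W}) (Q :: π) ∧
    ¬ G.MSep Q Y (Z ∪ {W}) := by

  obtain ⟨v, rest, hπeq, hvW⟩ := hfirst
  obtain ⟨hlen, hnd, hch, hhd, hlast⟩ := hπ
  -- membership helper: y in a middle triple of π is not W
  have hWnotin : W ∉ (v :: rest) := by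
    rw [hπeq] at hnd; exact (List.nodup_cons.mp hnd).1
  have hmid : ∀ x y z : V, [x, y, z] <:+: π → y ≠ W := by
    intro x y z hinf hyW
    obtain ⟨s, t, hst⟩ := hinf
    rw [hπeq] at hst
    apply hWnotin
    rw [← hyW]
    cases s with
    | nil =>
      have h2 : [y, z] ++ t = v :: rest := by
        simpa using congrArg List.tail hst
      rw [← h2]; simp
    | cons a s' =>
      have h2 : s' ++ [x, y, z] ++ t = v :: rest := by
        simpa using congrArg List.tail hst
      rw [← h2]; simp
  have hpath : G.IsPath Q Y (Q :: π) := by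
    refine ⟨?_, ?_, ?_, ?_, ?_⟩
    · simp [hπeq]
    · exact List.nodup_cons.mpr ⟨hQπ, hnd⟩
    · rw [hπeq] at hch ⊢
      exact List.isChain_cons_cons.mpr ⟨hadj, hch⟩
    · rfl
    · rw [hπeq] at hlast ⊢
      rw [List.getLast?_cons_cons]
      exact hlast
  have hcol : G.IsColliderOn (Q :: π) W := by
    refine ⟨Q, v, ?_, hmark, hvW⟩
    rw [hπeq]
    exact ⟨[], rest, rfl⟩
  have hWmem : W ∈ Z ∪ {W} := Or.inr rfl
  have hnb : ¬ G.Blocked (Z ∪ {W}) (Q :: π) := by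
    intro hb
    obtain ⟨x, y, z, hinf, hcase⟩ := hb
    rcases List.infix_cons_iff.mp hinf with hpre | hinf'
    · -- prefix: x = Q, y = W, z = v
      obtain ⟨t, ht⟩ := hpre
      rw [hπeq] at ht
      simp only [List.cons_append, List.cons.injEq] at ht
      obtain ⟨hx, hy, hz, -⟩ := ht
      rcases hcase with ⟨hnc, -⟩ | ⟨-, hall⟩
      · apply hnc; rw [hx, hy, hz]; exact ⟨hmark, hvW⟩
      · exact hall W (Or.inl hy.symm) (Or.inr rfl)
    · have hyW : y ≠ W := hmid x y z hinf'
      rcases hcase with ⟨hnc, hyZW⟩ | ⟨hc, hall⟩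
      · rcases hyZW with hyZ | hyW'
        · exact hunblocked ⟨x, y, z, hinf', Or.inl ⟨hnc, hyZ⟩⟩
        · exact hyW hyW'
      · exact hunblocked ⟨x, y, z, hinf',
          Or.inr ⟨hc, fun d hd hdZ => hall d hd (Or.inl hdZ)⟩⟩
  exact ⟨hpath, hcol, hWmem, hnb, fun hsep => hnb (hsep _ hpath)⟩
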